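/- arXiv:1110.2086 — 2 statements merged into one kernel-verified Lean document; each statement's English description precedes it below -/
import Mathlib

section
/- Let G be a subgroup of W(E6) that acts on the 27 lines with exactly three orbits of size 9 given by the three pairs of Steiner trihedra of a triplet. Then H^1(G, Pic) ≅ Z/3Z, where Pic ≅ Z^7 is the standard permutation-induced G-module on the divisor class lattice of the cubic surface. -/
open Finset

/-- The Picard lattice `ℤ^7` of a smooth cubic surface in the blown-up model,
with basis `l, e₁, …, e₆`. -/
abbrev Pic : Type := Fin 7 → ℤ

/-- The intersection form `diag(1, -1, …, -1)`. -/
def inter (u v : Pic) : ℤ := u 0 * v 0 - ∑ i : Fin 6, u i.succ * v i.succ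

/-- The class `l` of a general line in `P²`. -/
def lcl : Pic := fun j => if j = 0 then 1 else 0

/-- The classes `e i` of the exceptional curves. -/
def ee (i : Fin 6) : Pic := fun j => if j = i.succ then 1 else 0

/-- The 6 lines `a i = e i`. -/
def A (i : Fin 6) : Pic := ee i

/-- The 6 lines `b i = 2l - e₁ - ⋯ - e₆ + e i`. -/
def B (i : Fin 6) : Pic := (2 : ℤ) • lcl - (∑ k : Fin 6, ee k) + ee i

/-- The 15 lines `c i j = l - e i - e j`. -/
def C (i j : Fin 6) : Pic := lcl - ee i - ee j

/-- The hyperplane class `h = 3l - e₁ - ⋯ - e₆`. -/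
def hcl : Pic := (3 : ℤ) • lcl - ∑ k : Fin 6, ee k

/-- The canonical class `K = -h`. -/
def Kcl : Pic := -hcl

/-- The set of the 27 lines on a smooth cubic surface (blown-up model). -/
def lines : Finset Pic :=
  (univ.image A) ∪ (univ.image B) ∪
    ((univ ×ˢ univ : Finset (Fin 6 × Fin 6)).filter (fun p => p.1 ≠ p.2)).image
      (fun p => C p.1 p.2)

/-- The 27 lines as a type. -/
abbrev Line : Type := ↥lines

/-- The Weyl group `W(E₆)`: the permutations of the 27 lines preserving the
intersection pairing. -/
def WE6 : Subgroup (Equiv.Perm Line) where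
  carrier := {σ | ∀ x y : Line, inter (σ x).1 (σ y).1 = inter x.1 y.1}
  one_mem' := fun _ _ => rfl
  mul_mem' := by
    intro a b ha hb x y
    simpa [Equiv.Perm.mul_apply] using (ha (b x) (b y)).trans (hb x y)
  inv_mem' := by
    intro a ha x y
    have h := ha (a⁻¹ x) (a⁻¹ y)
    simpa using h.symm

/-- The subgroup of permutations of the 27 lines stabilizing a given set `P` of classes. -/
def Stab (P : Finset Pic) : Subgroup (Equiv.Perm Line) where
  carrier := {σ | ∀ x : Line, x.1 ∈ P ↔ (σ x).1 ∈ P}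
  one_mem' := fun _ => Iff.rfl
  mul_mem' := by
    intro a b ha hb x
    simpa [Equiv.Perm.mul_apply] using (hb x).trans (ha (b x))
  inv_mem' := by
    intro a ha x
    have h := ha (a⁻¹ x)
    simpa using h.symm

/-- The 9 lines of the first pair of Steiner trihedra of the standard triplet. -/
def Δ1 : Finset Pic := {A 0, A 1, A 2, B 0, B 1, B 2, C 0 1, C 0 2, C 1 2}

/-- The 9 lines of the second pair. -/
def Δ2 : Finset Pic := {A 3, A 4, A 5, B 3, B 4, B 5, C 3 4, C 3 5, C 4 5}

/-- The 9 lines of the third pair. -/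
def Δ3 : Finset Pic :=
  {C 0 3, C 0 4, C 0 5, C 1 3, C 1 4, C 1 5, C 2 3, C 2 4, C 2 5}

open groupCohomology

/-!
Pairing with the 27 lines embeds `Pic` equivariantly into the permutation module `ℤ^27`, and
the lines span `Pic`. For a cocycle `f` of the finite group `G`, summing the cocycle identity
gives `|G| • f σ = F - σ F` with `F = ∑ f`, so the pairings of `F` with the lines are constant
modulo `|G|` on each orbit. Already on `Δ1` and `Δ2` this forces
`F ≡ -F₁ h + (F₄ - F₁) w (mod |G|)` and `3 (F₁ - F₄) ≡ 0 (mod |G|)`, where `h = -K` is invariant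
and `w = e₄ + e₅ + e₆`. Hence every cocycle is cohomologous to a multiple of
`σ ↦ (σ w - w) / 3`, which is integral because `w · ℓ mod 3` is constant on each orbit; the same
computation with modulus `0` shows that its `k`-th multiple is a coboundary only when `3 ∣ k`.
-/

universe u

namespace groupCohomology

variable {k G : Type u} [CommRing k] [Group G] {A : Rep k G}

lemma mem_coboundaries₁_iff_exists {f : G → A} :
    f ∈ coboundaries₁ A ↔ ∃ x : A, ∀ g : G, A.ρ g x - x = f g := by
  simp only [coboundaries₁, LinearMap.mem_range, funext_iff, d₀₁_hom_apply]

lemma card_smul_cocycles₁_apply [Fintype G] (f : cocycles₁ A) (g : G) :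
    Fintype.card G • f g = ∑ h, f h - A.ρ g (∑ h, f h) := by
  have hsum : ∑ h, f (g * h) = ∑ h, f h := Fintype.sum_equiv (Equiv.mulLeft g) _ _ fun _ => rfl
  simp only [(mem_cocycles₁_iff f).1 f.2 g, sum_add_distrib, ← map_sum, sum_const, card_univ]
    at hsum
  exact eq_sub_of_add_eq' hsum

end groupCohomology

lemma nonempty_addEquiv_zmod_of_generator {H : Type*} [AddCommGroup H] (n : ℕ) (g : H)
    (hg : ∀ x : H, ∃ k : ℤ, k • g = x) (hker : ∀ k : ℤ, k • g = 0 ↔ (n : ℤ) ∣ k) :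
    Nonempty (H ≃+ ZMod n) := by
  have hN : AddSubgroup.zmultiples (n : ℤ) = (zmultiplesHom H g).ker := by
    ext k
    simp [Int.mem_zmultiples_iff, hker]
  exact ⟨((Int.quotientZMultiplesNatEquivZMod n).symm.trans
    (QuotientAddGroup.liftEquiv _ (φ := zmultiplesHom H g) hg hN)).symm⟩

def interWith (y : Pic) : Pic →ₗ[ℤ] ℤ where
  toFun u := inter u y
  map_add' u v := by simp only [inter, Pi.add_apply, add_mul, sum_add_distrib]; ring
  map_smul' k u := by
    simp only [inter, Pi.smul_apply, smul_eq_mul, mul_sub, mul_sum, mul_assoc, RingHom.id_apply]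

lemma inter_sub_left (u v y : Pic) : inter (u - v) y = inter u y - inter v y :=
  map_sub (interWith y) u v

lemma inter_zsmul_left (k : ℤ) (u y : Pic) : inter (k • u) y = k * inter u y :=
  (interWith y).map_smul k u

lemma inter_sub_right (z u v : Pic) : inter z (u - v) = inter z u - inter z v := by
  simp only [inter, Pi.sub_apply, mul_sub, sum_sub_distrib]; ring

lemma inter_ee_right (z : Pic) (i : Fin 6) : inter z (ee i) = -z i.succ := by
  simp [inter, ee, (Fin.succ_ne_zero i).symm]

lemma inter_lcl_right (z : Pic) : inter z lcl = z 0 := by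
  simp [inter, lcl]

lemma inter_A_right (z : Pic) (i : Fin 6) : inter z (A i) = -z i.succ :=
  inter_ee_right z i

lemma inter_C_right (z : Pic) (i j : Fin 6) : inter z (C i j) = z 0 + z i.succ + z j.succ := by
  rw [C, inter_sub_right, inter_sub_right, inter_lcl_right, inter_ee_right, inter_ee_right]
  ring

lemma A_mem_lines (i : Fin 6) : A i ∈ lines :=
  mem_union_left _ (mem_union_left _ (mem_image_of_mem A (mem_univ i)))

lemma C_mem_lines {i j : Fin 6} (h : i ≠ j) : C i j ∈ lines :=
  mem_union_right _ (mem_image.2 ⟨(i, j), by simp [h], rfl⟩)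

lemma inter_hcl_of_mem_lines : ∀ p ∈ lines, inter hcl p = 1 := by decide

lemma span_lines : Submodule.span ℤ (lines : Set Pic) = ⊤ := by
  have hA (i : Fin 6) : Pi.basisFun ℤ (Fin 7) i.succ = A i := by
    funext j; simp [A, ee, Pi.single_apply]
  have hl : Pi.basisFun ℤ (Fin 7) 0 = C 0 1 + A 0 + A 1 := by
    rw [Pi.basisFun_apply]; decide
  have hmem {p : Pic} (hp : p ∈ lines) : p ∈ Submodule.span ℤ (lines : Set Pic) :=
    Submodule.subset_span hp
  rw [eq_top_iff, ← (Pi.basisFun ℤ (Fin 7)).span_eq, Submodule.span_le]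
  rintro _ ⟨j, rfl⟩
  refine Fin.cases ?_ (fun i => ?_) j
  · rw [hl]
    exact add_mem (add_mem (hmem (C_mem_lines (by decide))) (hmem (A_mem_lines 0)))
      (hmem (A_mem_lines 1))
  · rw [hA]
    exact hmem (A_mem_lines i)

lemma dvd_apply_of_forall_dvd_inter {m : ℤ} {z : Pic} (h : ∀ p ∈ lines, m ∣ inter z p)
    (j : Fin 7) : m ∣ z j := by
  have hA (i : Fin 6) : m ∣ z i.succ := by
    simpa [inter_A_right] using h (A i) (A_mem_lines i)
  refine Fin.cases ?_ hA j
  have hC := h (C 0 1) (C_mem_lines (by decide))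
  rw [inter_C_right] at hC
  rw [show z 0 = z 0 + z (Fin.succ 0) + z (Fin.succ 1) - z (Fin.succ 0) - z (Fin.succ 1) by ring]
  exact dvd_sub (dvd_sub hC (hA 0)) (hA 1)

lemma ext_of_inter_eq {z z' : Pic} (h : ∀ p ∈ lines, inter z p = inter z' p) : z = z' := by
  funext j
  have := dvd_apply_of_forall_dvd_inter (m := 0) (z := z - z')
    (fun p hp => by rw [inter_sub_left, h p hp, sub_self]) j
  simpa [sub_eq_zero] using this

def wcl : Pic := ee 3 + ee 4 + ee 5

def SameBlock (p q : Pic) : Prop :=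
  (p ∈ Δ1 ∧ q ∈ Δ1) ∨ (p ∈ Δ2 ∧ q ∈ Δ2) ∨ (p ∈ Δ3 ∧ q ∈ Δ3)

instance : DecidableRel SameBlock := fun p q => by unfold SameBlock; infer_instance

lemma SameBlock.inter_wcl_modEq {p q : Pic} (h : SameBlock p q) :
    inter wcl p ≡ inter wcl q [ZMOD 3] := by
  have h1 : ∀ p ∈ Δ1, inter wcl p ≡ 0 [ZMOD 3] := by decide
  have h2 : ∀ p ∈ Δ2, inter wcl p ≡ 2 [ZMOD 3] := by decide
  have h3 : ∀ p ∈ Δ3, inter wcl p ≡ 1 [ZMOD 3] := by decide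
  rcases h with ⟨hp, hq⟩ | ⟨hp, hq⟩ | ⟨hp, hq⟩
  · exact (h1 p hp).trans (h1 q hq).symm
  · exact (h2 p hp).trans (h2 q hq).symm
  · exact (h3 p hp).trans (h3 q hq).symm

lemma hcl_eq : hcl = ![3, -1, -1, -1, -1, -1, -1] := by decide

lemma wcl_eq : wcl = ![0, 0, 0, 0, 1, 1, 1] := by decide

lemma dvd_and_exists_eq_of_dvd_inter_sub {n : ℤ} {F : Pic}
    (h : ∀ x y : Line, SameBlock x.1 y.1 → n ∣ inter F x.1 - inter F y.1) :
    n ∣ 3 * (F 1 - F 4) ∧ ∃ v : Pic, F = (-F 1) • hcl + (F 4 - F 1) • wcl + n • v := by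
  have hA (i j : Fin 6) (hij : SameBlock (A i) (A j)) : n ∣ F j.succ - F i.succ := by
    have := h ⟨_, A_mem_lines i⟩ ⟨_, A_mem_lines j⟩ hij
    rwa [inter_A_right, inter_A_right, neg_sub_neg] at this
  have hC (i j k : Fin 6) (hjk : j ≠ k) (hij : SameBlock (A i) (C j k)) :
      n ∣ F 0 + F i.succ + F j.succ + F k.succ := by
    have := h ⟨_, A_mem_lines i⟩ ⟨_, C_mem_lines hjk⟩ hij
    rwa [inter_A_right, inter_C_right, ← neg_add', ← add_assoc, ← add_assoc, dvd_neg,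
      add_comm (F i.succ) (F 0)] at this
  obtain ⟨a, ha⟩ := hA 0 1 (by decide)
  obtain ⟨b, hb⟩ := hA 0 2 (by decide)
  obtain ⟨c, hc⟩ := hC 0 0 1 (by decide) (by decide)
  obtain ⟨d, hd⟩ := hA 3 4 (by decide)
  obtain ⟨e, he⟩ := hA 3 5 (by decide)
  obtain ⟨f, hf⟩ := hC 3 3 4 (by decide) (by decide)
  simp only [Fin.reduceSucc] at ha hb hc hd he hf
  refine ⟨⟨c - a - f + d, by linear_combination hc - ha - hf + hd⟩, ![c - a, 0, a, b, 0, d, e], ?_⟩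
  funext j
  fin_cases j <;> simp [hcl_eq, wcl_eq] <;> linarith

section LineAction

variable {G : Subgroup (Equiv.Perm Line)}

def IsLinePermutation (ρ : Representation ℤ G Pic) : Prop :=
  ∀ σ : G, ∀ x : Line, ρ σ x.1 = ((σ : Equiv.Perm Line) x).1

def HasBlockOrbits (G : Subgroup (Equiv.Perm Line)) : Prop :=
  ∀ x y : Line, (∃ σ ∈ G, σ x = y) ↔ SameBlock x.1 y.1

variable {ρ : Representation ℤ G Pic}

lemma inter_rho_apply_perm_apply (hG : G ≤ WE6) (hρ : IsLinePermutation ρ) (σ : G) (v : Pic)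
    (x : Line) : inter (ρ σ v) ((σ : Equiv.Perm Line) x).1 = inter v x.1 := by
  have key : (interWith ((σ : Equiv.Perm Line) x).1).comp (ρ σ) = interWith x.1 :=
    LinearMap.ext_on span_lines fun p hp => by
      simpa [interWith, hρ σ ⟨p, hp⟩] using hG σ.2 ⟨p, hp⟩ x
  exact LinearMap.congr_fun key v

lemma rho_eq_self_of_inter_eq (hG : G ≤ WE6) (hρ : IsLinePermutation ρ) {σ : G} {m : Pic}
    (h : ∀ x : Line, inter m ((σ : Equiv.Perm Line) x).1 = inter m x.1) : ρ σ m = m := by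
  refine ext_of_inter_eq fun p hp => ?_
  obtain ⟨x, hx⟩ := (σ : Equiv.Perm Line).surjective ⟨p, hp⟩
  have hp' : p = ((σ : Equiv.Perm Line) x).1 := by rw [hx]
  rw [hp', inter_rho_apply_perm_apply hG hρ, h]

lemma rho_apply_hcl (hG : G ≤ WE6) (hρ : IsLinePermutation ρ) (σ : G) : ρ σ hcl = hcl :=
  rho_eq_self_of_inter_eq hG hρ fun x => by
    rw [inter_hcl_of_mem_lines _ x.2, inter_hcl_of_mem_lines _ ((σ : Equiv.Perm Line) x).2]

lemma dvd_inter_sub_of_sameBlock (hG : G ≤ WE6) (hρ : IsLinePermutation ρ)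
    (horb : HasBlockOrbits G) {n : ℤ} {F : Pic} (hF : ∀ σ : G, ∃ c, F - ρ σ F = n • c)
    {x y : Line} (hxy : SameBlock x.1 y.1) : n ∣ inter F x.1 - inter F y.1 := by
  obtain ⟨σ, hσ, rfl⟩ := (horb x y).2 hxy
  obtain ⟨c, hc⟩ := hF ⟨σ, hσ⟩
  have := congrArg (inter · (σ x).1) hc
  simp only [inter_sub_left, inter_zsmul_left] at this
  rw [inter_rho_apply_perm_apply hG hρ ⟨σ, hσ⟩] at this
  exact ⟨-inter c (σ x).1, by linarith⟩

variable (ρ) in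
def wCocycle (σ : G) : Pic := fun j => (ρ σ wcl - wcl) j / 3

lemma three_zsmul_wCocycle (hG : G ≤ WE6) (hρ : IsLinePermutation ρ) (horb : HasBlockOrbits G)
    (σ : G) : (3 : ℤ) • wCocycle ρ σ = ρ σ wcl - wcl := by
  refine funext fun j => Int.mul_ediv_cancel' (dvd_apply_of_forall_dvd_inter (fun p hp => ?_) j)
  obtain ⟨x, hx⟩ := (σ : Equiv.Perm Line).surjective ⟨p, hp⟩
  have hp' : p = ((σ : Equiv.Perm Line) x).1 := by rw [hx]
  rw [hp', inter_sub_left, inter_rho_apply_perm_apply hG hρ]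
  exact ((horb x _).1 ⟨σ, σ.2, rfl⟩).inter_wcl_modEq.symm.dvd

lemma wCocycle_mem_cocycles₁ (hG : G ≤ WE6) (hρ : IsLinePermutation ρ)
    (horb : HasBlockOrbits G) : wCocycle ρ ∈ cocycles₁ (Rep.of ρ) := by
  rw [mem_cocycles₁_iff]
  intro g h
  apply smul_right_injective Pic (three_ne_zero (α := ℤ))
  simp only [smul_add, ← map_zsmul, three_zsmul_wCocycle hG hρ horb, map_mul,
    Module.End.mul_apply, map_sub]
  abel

lemma zsmul_wCocycle_mem_coboundaries₁_iff (hG : G ≤ WE6) (hρ : IsLinePermutation ρ)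
    (horb : HasBlockOrbits G) (k : ℤ) :
    k • wCocycle ρ ∈ coboundaries₁ (Rep.of ρ) ↔ 3 ∣ k := by
  rw [mem_coboundaries₁_iff_exists]
  constructor
  · rintro ⟨v, hv⟩
    set m : Pic := k • wcl - (3 : ℤ) • v
    have hm (σ : G) : ∃ c, m - ρ σ m = (0 : ℤ) • c := by
      have hvσ : ρ σ v - v = k • wCocycle ρ σ := hv σ
      have hw := three_zsmul_wCocycle hG hρ horb σ
      refine ⟨0, ?_⟩
      simp only [m, zero_smul, map_sub, map_zsmul]
      linear_combination (norm := module) (3 : ℤ) • hvσ + k • hw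
    obtain ⟨⟨c, hc⟩, -⟩ := dvd_and_exists_eq_of_dvd_inter_sub
      fun x y => dvd_inter_sub_of_sameBlock hG hρ horb hm
    simp only [m, Pi.sub_apply, Pi.smul_apply, smul_eq_mul, show wcl 1 = 0 by decide,
      show wcl 4 = 1 by decide] at hc
    omega
  · rintro ⟨j, rfl⟩
    refine ⟨j • wcl, fun σ => ?_⟩
    simp only [map_zsmul, ← smul_sub, ← three_zsmul_wCocycle hG hρ horb, smul_smul]
    rw [Pi.smul_apply, mul_comm]

lemma exists_zsmul_wCocycle_sub_mem_coboundaries₁ (hG : G ≤ WE6) (hρ : IsLinePermutation ρ)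
    (horb : HasBlockOrbits G) (f : cocycles₁ (Rep.of ρ)) :
    ∃ k : ℤ, k • wCocycle ρ - f ∈ coboundaries₁ (Rep.of ρ) := by
  have : Fintype G := Fintype.ofFinite G
  have hn : (3 * Fintype.card G : ℤ) ≠ 0 := by positivity
  have hnf (σ : G) : (Fintype.card G : ℤ) • f σ = ∑ τ, f τ - ρ σ (∑ τ, f τ) := by
    rw [natCast_zsmul]
    exact card_smul_cocycles₁_apply f σ
  obtain ⟨⟨j, hj⟩, v, hv⟩ := dvd_and_exists_eq_of_dvd_inter_sub fun x y =>
    dvd_inter_sub_of_sameBlock hG hρ horb fun σ => ⟨f σ, (hnf σ).symm⟩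
  refine ⟨j, mem_coboundaries₁_iff_exists.2 ⟨v, fun σ => ?_⟩⟩
  have hρF := congrArg (ρ σ) hv
  simp only [map_add, map_zsmul, rho_apply_hcl hG hρ] at hρF
  have hw := three_zsmul_wCocycle hG hρ horb σ
  apply smul_right_injective Pic hn
  simp only [Pi.sub_apply, Pi.smul_apply]
  linear_combination (norm := module) (3 : ℤ) • hnf σ + (3 : ℤ) • hv - (3 : ℤ) • hρF
    + (3 * ((∑ τ, f τ) 4 - (∑ τ, f τ) 1)) • hw + (3 : ℤ) • hj • wCocycle ρ σ

end LineAction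

/-- If a subgroup `G` of `W(E₆)` acts on the 27 lines with exactly the three orbits of
size 9 given by a triplet of pairs of Steiner trihedra, then `H¹(G, Pic) ≅ ℤ/3ℤ`, where
`Pic` is the rank-7 permutation-induced `G`-module. -/
theorem stmt9 (G : Subgroup (Equiv.Perm Line)) (hG : G ≤ WE6)
    (horb : ∀ x y : Line, (∃ σ ∈ G, σ x = y) ↔
      ((x.1 ∈ Δ1 ∧ y.1 ∈ Δ1) ∨ (x.1 ∈ Δ2 ∧ y.1 ∈ Δ2) ∨ (x.1 ∈ Δ3 ∧ y.1 ∈ Δ3)))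
    (ρ : Representation ℤ G Pic)
    (hρ : ∀ σ : G, ∀ x : Line, ρ σ x.1 = ((σ : Equiv.Perm Line) x).1) :
    Nonempty (groupCohomology.H1 (Rep.of ρ) ≃+ ZMod 3) := by
  refine nonempty_addEquiv_zmod_of_generator 3
    (H1π (Rep.of ρ) ⟨_, wCocycle_mem_cocycles₁ hG hρ horb⟩) (fun c => ?_) (fun k => ?_)
  · induction c using H1_induction_on with
    | h f =>
      obtain ⟨k, hk⟩ := exists_zsmul_wCocycle_sub_mem_coboundaries₁ hG hρ horb f
      exact ⟨k, by rw [← map_zsmul, H1π_eq_iff]; exact hk⟩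
  · rw [← map_zsmul, H1π_eq_zero_iff]
    exact zsmul_wCocycle_mem_coboundaries₁_iff hG hρ horb k
end

section
/- Let H' be a normal subgroup of a finite group H acting on a finitely generated free Z-module M such that the ranks of the invariant submodules coincide: rk M^H = rk M^{H'}. Then the restriction map H^1(H, M) → H^1(H', M) is injective. -/
/-- A 1-cocycle for the representation `ρ`. -/
def IsCocycle {G M : Type} [Group G] [AddCommGroup M] [Module ℤ M]
    (ρ : Representation ℤ G M) (f : G → M) : Prop :=
  ∀ g h : G, f (g * h) = ρ g (f h) + f g

/-- A 1-coboundary for the representation `ρ`. -/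
def IsCoboundary {G M : Type} [Group G] [AddCommGroup M] [Module ℤ M]
    (ρ : Representation ℤ G M) (f : G → M) : Prop :=
  ∃ m : M, ∀ g : G, f g = ρ g m - m

/-- Any two `ℤ`-module structures on an abelian group agree. -/
lemma aux_moduleIntEq {A : Type} [AddCommGroup A] (P Q : Module ℤ A) : P = Q := by
  letI := AddCommGroup.uniqueIntModule (M := A)
  exact Subsingleton.elim P Q

/-- Ranks agree for any two `ℤ`-module structures. -/
lemma aux_rank_congr {A : Type} [AddCommGroup A] (P Q : Module ℤ A) :
    @Module.rank ℤ A _ _ P = @Module.rank ℤ A _ _ Q := by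
  rw [aux_moduleIntEq P Q]

/-- Any module `ℤ`-scalar action agrees with the canonical `zsmul`. -/
lemma aux_smul_bridge {M : Type} [AddCommGroup M] (inst : Module ℤ M) (k : ℤ) (x : M) :
    @HSMul.hSMul ℤ M M (@instHSMul ℤ M inst.toSMul) k x = k • x :=
  int_smul_eq_zsmul inst k x

/-- Cardinal cancellation: if `p + q = r`, `q = r` and `r` is finite then `p = 0`. -/
lemma aux_card_cancel {p q r : Cardinal} (h : p + q = r) (hqr : q = r)
    (hr : r < Cardinal.aleph0) : p = 0 := by
  have hp : p < Cardinal.aleph0 := ((le_add_right le_rfl).trans_eq h).trans_lt hr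
  obtain ⟨a, rfl⟩ := Cardinal.lt_aleph0.mp hp
  obtain ⟨b, rfl⟩ := Cardinal.lt_aleph0.mp hr
  rw [hqr] at h
  norm_cast at h ⊢
  omega

/-- In a free `ℤ`-module, `zsmul` by a nonzero integer is injective at zero. -/
lemma aux_zsmul_cancel {M : Type} [AddCommGroup M] [Module ℤ M] [Module.Free ℤ M]
    {k : ℤ} (hk : k ≠ 0) {x : M} (h : k • x = 0) : x = 0 := by
  let b := Module.Free.chooseBasis ℤ M
  have h2 : (k : ℤ) • (b.repr x) = 0 := by
    rw [← map_zsmul b.repr k x, h, map_zero]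
  have h3 : b.repr x = 0 := by
    ext a
    have h4 : (k • (b.repr x)) a = 0 := by rw [h2]; rfl
    have h5 : (k • (b.repr x)) a = k • ((b.repr x) a) :=
      map_zsmul (Finsupp.applyAddHom (M := ℤ) a) k (b.repr x)
    rw [h5, smul_eq_mul] at h4
    rcases mul_eq_zero.mp h4 with h6 | h6
    · exact absurd h6 hk
    · simpa using h6
  have h6 : b.repr x = b.repr 0 := by rw [h3, map_zero]
  exact b.repr.injective h6

/-- Torsion lemma: if `S ≤ N` are submodules of a f.g. `ℤ`-module with equal rank,
every element of `N` has a nonzero multiple in `S`. -/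
lemma aux_torsion {M : Type} [AddCommGroup M] [Module ℤ M] [Module.Finite ℤ M]
    (S N : Submodule ℤ M) (hSN : S ≤ N)
    (h : Module.rank ℤ S = Module.rank ℤ N) :
    ∀ x ∈ N, ∃ k : ℤ, k ≠ 0 ∧ k • x ∈ S := by
  intro x hx
  letI instN : Module ℤ ↥N := N.module
  letI instS : Module ℤ ↥S := S.module
  let S' := S.comap N.subtype
  letI instS' : Module ℤ ↥S' := S'.module
  letI instQ : Module ℤ (↥N ⧸ S') := Submodule.Quotient.module S'
  have hS'S := (Submodule.comapSubtypeEquivOfLe hSN).rank_eq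
  have hq := S'.rank_quotient_add_rank
  have hcan := (aux_rank_congr S.module (AddCommGroup.toIntModule ↥S)).trans
      (h.trans (aux_rank_congr (AddCommGroup.toIntModule ↥N) N.module))
  have hS'N := hS'S.trans hcan
  haveI hNfg : Module.Finite ℤ ↥N := Module.Finite.iff_fg.mpr (IsNoetherian.noetherian N)
  have hNfin := Module.rank_lt_aleph0 ℤ ↥N
  have hq0 := aux_card_cancel hq hS'N hNfin
  set x' : ↥N := ⟨x, hx⟩ with hx'def
  obtain ⟨k, hk0, hk⟩ := rank_eq_zero_iff.mp hq0 (Submodule.Quotient.mk x')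
  refine ⟨k, hk0, ?_⟩
  rw [← Submodule.Quotient.mk_smul, Submodule.Quotient.mk_eq_zero] at hk
  rw [aux_smul_bridge N.module k x'] at hk
  have hmemM := Submodule.mem_comap.mp hk
  rw [map_zsmul N.subtype k x'] at hmemM
  exact hmemM

/-- If `H'` is normal in a finite group `H` acting on a finitely generated free
`ℤ`-module `M` with `rk M^H = rk M^{H'}`, then the restriction map
`H¹(H, M) → H¹(H', M)` is injective: every 1-cocycle on `H` whose restriction to `H'`
is a coboundary is itself a coboundary. -/
theorem stmt11 {H : Type} [Group H] [Finite H] (H' : Subgroup H) [H'.Normal]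
    {M : Type} [AddCommGroup M] [Module ℤ M] [Module.Free ℤ M] [Module.Finite ℤ M]
    (ρ : Representation ℤ H M)
    (hrk : Module.rank ℤ (Representation.invariants ρ) = Module.rank ℤ (Representation.invariants (ρ.comp H'.subtype)))
    (f : H → M) (hf : IsCocycle ρ f)
    (hres : IsCoboundary (ρ.comp H'.subtype) (fun g : H' => f g)) :
    IsCoboundary ρ f := by
  obtain ⟨m, hm⟩ := hres
  set N := Representation.invariants (ρ.comp H'.subtype) with hNdef
  set S := Representation.invariants ρ with hSdef
  have hSN : S ≤ N := by
    intro x hxS h'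
    exact hxS (h' : H)
  -- the modified cocycle
  set g : H → M := fun h => f h - (ρ h m - m) with hg
  have hgc : ∀ a b : H, g (a * b) = ρ a (g b) + g a := by
    intro a b
    simp only [hg, hf a b, map_mul, map_sub, Module.End.mul_apply]
    abel
  have hg0 : ∀ h' : H', g h' = 0 := by
    intro h'
    simp [hg, hm h']
  -- g takes values in N
  have hgN : ∀ h : H, g h ∈ N := by
    intro h h''
    have h' : (h⁻¹ * h'' * h : H) ∈ H' := Subgroup.Normal.conj_mem' ‹H'.Normal› h'' h''.2 h
    have e1 : g (h * (h⁻¹ * (h'' : H) * h)) = g h := by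
      rw [hgc, hg0 ⟨_, h'⟩, map_zero, zero_add]
    have e2 : ((h'' : H) * h) = h * (h⁻¹ * (h'' : H) * h) := by group
    have e3 : g ((h'' : H) * h) = ρ (h'' : H) (g h) := by
      rw [hgc, hg0 h'', add_zero]
    show (ρ.comp H'.subtype) h'' (g h) = g h
    calc (ρ.comp H'.subtype) h'' (g h) = ρ (h'' : H) (g h) := rfl
      _ = g ((h'' : H) * h) := e3.symm
      _ = g h := by rw [e2, e1]
  -- H acts trivially on N
  have htriv : ∀ x ∈ N, ∀ h : H, ρ h x = x := by
    intro x hx h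
    obtain ⟨k, hk0, hkS⟩ := aux_torsion S N hSN hrk x hx
    have h1 : ρ h (k • x) = k • x := hkS h
    rw [map_zsmul] at h1
    have h2 : k • (ρ h x - x) = 0 := by
      rw [zsmul_sub, h1, sub_self]
    exact sub_eq_zero.mp (aux_zsmul_cancel hk0 h2)
  -- g is a homomorphism
  have hadd : ∀ a b : H, g (a * b) = g a + g b := by
    intro a b
    rw [hgc, htriv _ (hgN b) a, add_comm]
  have hone : g 1 = 0 := hg0 ⟨1, H'.one_mem⟩
  have hpow : ∀ (a : H) (n : ℕ), g (a ^ n) = n • g a := by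
    intro a n
    induction n with
    | zero => simpa using hone
    | succ n ih => rw [pow_succ, hadd, ih, succ_nsmul]
  have hzero : ∀ h : H, g h = 0 := by
    intro h
    have h1 : (orderOf h) • g h = 0 := by
      rw [← hpow, pow_orderOf_eq_one, hone]
    have h2 : ((orderOf h : ℤ)) • g h = 0 := by
      rw [natCast_zsmul]; exact h1
    exact aux_zsmul_cancel (by exact_mod_cast (orderOf_pos h).ne') h2
  exact ⟨m, fun h => sub_eq_zero.mp (hzero h)⟩
end
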